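/- arXiv:2107.06797 — 3 statements merged into one kernel-verified Lean document; each statement's English description precedes it below -/
import Mathlib

section
/- Let d(y) = d_{abc}y^a y^b y^c be a cubic on ℝⁿ with quadratic map h, extended to ℂⁿ. Fix p⁰ ≠ 0, p ∈ ℝⁿ, θ ∈ ℝ with sin θ ≠ 0, and c, t > 0 with c·t·sin θ = p⁰. Let z̃ = x̃ + i ỹ ∈ ℂⁿ with ỹ = −p/(c t). Then the ℝⁿ-valued quantity q := 3 c t · Re(i e^{iθ} h(z̃)) satisfies 3 (p⁰)² h(x̃ + (cos θ / sin θ) ỹ) = 3 h(p) − p⁰ q. -/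
/-!
With `B` the polar form of `h`, one has `h(x̃ + iỹ) = h(x̃) - h(ỹ) + 2i B(x̃, ỹ)`, so `q` and
`h(x̃ + cot θ ỹ)` are both combinations of `h(x̃)`, `h(ỹ)`, `B(x̃, ỹ)`, and `h(p) = (ct)² h(ỹ)`.
Comparing coefficients, the identity reduces to `sin² θ + cos² θ = 1`.
-/

open Complex

/-- The complexified quadratic map of the symmetric cubic tensor `D`. -/
noncomputable def hC {n : ℕ} (D : Fin n → Fin n → Fin n → ℝ) (z : Fin n → ℂ) : Fin n → ℂ :=
  fun a => ∑ b, ∑ c, (D a b c : ℂ) * z b * z c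

/-- The real quadratic map of the symmetric cubic tensor `D`. -/
def hR {n : ℕ} (D : Fin n → Fin n → Fin n → ℝ) (y : Fin n → ℝ) : Fin n → ℝ :=
  fun a => ∑ b, ∑ c, D a b c * y b * y c

def polarR {n : ℕ} (D : Fin n → Fin n → Fin n → ℝ) (x y : Fin n → ℝ) : Fin n → ℝ :=
  fun a => ∑ b, ∑ c, D a b c * x b * y c

section QuadraticMap

variable {n : ℕ} {D : Fin n → Fin n → Fin n → ℝ}

theorem polarR_comm (hD : ∀ a b c, D a b c = D a c b) (x y : Fin n → ℝ) (a : Fin n) :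
    polarR D y x a = polarR D x y a := by
  unfold polarR
  rw [Finset.sum_comm]
  refine Finset.sum_congr rfl fun b _ => Finset.sum_congr rfl fun c _ => ?_
  rw [hD]; ring

theorem hR_smul (s : ℝ) (y : Fin n → ℝ) (a : Fin n) :
    hR D (fun j => s * y j) a = s ^ 2 * hR D y a := by
  simp only [hR, Finset.mul_sum]
  refine Finset.sum_congr rfl fun b _ => Finset.sum_congr rfl fun c _ => ?_
  ring

theorem hR_add_smul (hD : ∀ a b c, D a b c = D a c b) (s : ℝ) (x y : Fin n → ℝ) (a : Fin n) :
    hR D (fun j => x j + s * y j) a =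
      hR D x a + 2 * s * polarR D x y a + s ^ 2 * hR D y a := by
  have hexpand : hR D (fun j => x j + s * y j) a =
      hR D x a + s * polarR D x y a + s * polarR D y x a + s ^ 2 * hR D y a := by
    simp only [hR, polarR, Finset.mul_sum, ← Finset.sum_add_distrib]
    refine Finset.sum_congr rfl fun b _ => Finset.sum_congr rfl fun c _ => ?_
    ring
  rw [hexpand, polarR_comm hD]
  ring

theorem hC_ofReal_add_mul_I (hD : ∀ a b c, D a b c = D a c b) (x y : Fin n → ℝ) (a : Fin n) :
    hC D (fun j => (x j : ℂ) + (y j : ℂ) * I) a =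
      ((hR D x a - hR D y a : ℝ) : ℂ) + ((2 * polarR D x y a : ℝ) : ℂ) * I := by
  have hexpand : hC D (fun j => (x j : ℂ) + (y j : ℂ) * I) a =
      ((hR D x a - hR D y a : ℝ) : ℂ) + ((polarR D x y a + polarR D y x a : ℝ) : ℂ) * I := by
    simp only [hC, hR, polarR]
    push_cast
    simp only [Finset.sum_mul, ← Finset.sum_sub_distrib, ← Finset.sum_add_distrib]
    refine Finset.sum_congr rfl fun b _ => Finset.sum_congr rfl fun c _ => ?_
    linear_combination (D a b c : ℂ) * y b * y c * I_sq
  rw [hexpand, polarR_comm hD, ← two_mul]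

end QuadraticMap

theorem re_I_mul_exp_mul_I (θ : ℝ) (w : ℂ) :
    (I * exp (θ * I) * w).re = -(Real.sin θ * w.re + Real.cos θ * w.im) := by
  rw [exp_mul_I, ← ofReal_cos, ← ofReal_sin]
  simp only [mul_re, mul_im, add_re, add_im, I_re, I_im, ofReal_re, ofReal_im]
  ring

theorem stmt10_general {n : ℕ} (D : Fin n → Fin n → Fin n → ℝ)
    (hsymm₁ : ∀ a b c, D a b c = D a c b)
    (p0 : ℝ) (p : Fin n → ℝ) (θ : ℝ) (hθ : Real.sin θ ≠ 0)
    (c t : ℝ) (hc : 0 < c) (ht : 0 < t) (hct : c * t * Real.sin θ = p0)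
    (xt yt : Fin n → ℝ) (hyt : yt = fun j => -(p j) / (c * t))
    (zt : Fin n → ℂ) (hzt : zt = fun j => (xt j : ℂ) + (yt j : ℂ) * Complex.I)
    (q : Fin n → ℝ)
    (hq : q = fun a => 3 * c * t *
      (Complex.I * Complex.exp ((θ : ℂ) * Complex.I) * hC D zt a).re) :
    ∀ a, 3 * p0 ^ 2 *
        hR D (fun j => xt j + (Real.cos θ / Real.sin θ) * yt j) a =
      3 * hR D p a - p0 * q a := by
  intro a
  have hp : p = fun j => -(c * t) * yt j := by
    funext j
    rw [hyt]
    field_simp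
  subst hzt hq hct
  rw [hp]
  beta_reduce
  rw [hR_add_smul hsymm₁, hR_smul, hC_ofReal_add_mul_I hsymm₁, re_I_mul_exp_mul_I]
  simp only [add_re, add_im, mul_re, mul_im, ofReal_re, ofReal_im, I_re, I_im]
  field_simp
  rw [Real.cos_sq']
  ring

/-- Key identity in the inversion of the BPS map: with `p⁰ = c·t·sin θ ≠ 0`,
`ỹ = −p/(ct)`, `z̃ = x̃ + iỹ` and `q := 3ct·Re(i e^{iθ} h(z̃))`, one has
`3(p⁰)² h(x̃ + (cos θ/sin θ)ỹ) = 3h(p) − p⁰ q`. -/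
theorem stmt10 {n : ℕ} (D : Fin n → Fin n → Fin n → ℝ)
    (hsymm₁ : ∀ a b c, D a b c = D a c b) (hsymm₂ : ∀ a b c, D a b c = D b a c)
    (p0 : ℝ) (hp0 : p0 ≠ 0) (p : Fin n → ℝ) (θ : ℝ) (hθ : Real.sin θ ≠ 0)
    (c t : ℝ) (hc : 0 < c) (ht : 0 < t) (hct : c * t * Real.sin θ = p0)
    (xt yt : Fin n → ℝ) (hyt : yt = fun j => -(p j) / (c * t))
    (zt : Fin n → ℂ) (hzt : zt = fun j => (xt j : ℂ) + (yt j : ℂ) * Complex.I)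
    (q : Fin n → ℝ)
    (hq : q = fun a => 3 * c * t *
      (Complex.I * Complex.exp ((θ : ℂ) * Complex.I) * hC D zt a).re) :
    ∀ a, 3 * p0 ^ 2 *
        hR D (fun j => xt j + (Real.cos θ / Real.sin θ) * yt j) a =
      3 * hR D p a - p0 * q a :=
  stmt10_general D hsymm₁ p0 p θ hθ c t hc ht hct xt yt hyt zt hzt q hq
end

section
/- Let d be a cubic on ℝⁿ with quadratic map h, and let 𝒟^{ab}(p) denote the inverse of the matrix (d_{abc}p^c) (assumed invertible). Suppose p ∈ ℝⁿ, q₀ ∈ ℝ, q ∈ ℝⁿ, and suppose (x, y, c, t) with c, t > 0, y in the cone {d > 0}, satisfy: p = −c t y, q = −6 c t (d_{abc} x^b y^c)_a, and q₀ = 3⟨h(x), c t y⟩ − d(c t y)/(c t)². Then x = (1/6)𝒟(p,q) where 𝒟(p,q)^a = 𝒟^{ab}(p)q_b, and (c t)² = 12 d(p) / (⟨q, 𝒟(p,q)⟩ + 12 q₀). -/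
/-- The cubic determined by the symmetric tensor `D`. -/
def dCub {n : ℕ} (D : Fin n → Fin n → Fin n → ℝ) (y : Fin n → ℝ) : ℝ :=
  ∑ a, ∑ b, ∑ c, D a b c * y a * y b * y c

/-- The associated quadratic map `h_a(y) = d_{abc} y^b y^c`. -/
def hQuad {n : ℕ} (D : Fin n → Fin n → Fin n → ℝ) (y : Fin n → ℝ) : Fin n → ℝ :=
  fun a => ∑ b, ∑ c, D a b c * y b * y c

lemma relabel3 {n : ℕ} (f : Fin n → Fin n → Fin n → ℝ) :
    ∑ a, ∑ b, ∑ e, f a b e = ∑ a, ∑ b, ∑ e, f e b a :=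
  calc ∑ a, ∑ b, ∑ e, f a b e
      = ∑ a, ∑ e, ∑ b, f a b e := Finset.sum_congr rfl fun _ _ => Finset.sum_comm
    _ = ∑ e, ∑ a, ∑ b, f a b e := Finset.sum_comm
    _ = ∑ e, ∑ b, ∑ a, f a b e := Finset.sum_congr rfl fun _ _ => Finset.sum_comm

/-- Shmakova's inversion of the BPS map in the case `p⁰ = 0`: if
`p = −ct·y`, `q = −6ct·d_{abc}x^b y^c` and `q₀ = 3⟨h(x), ct·y⟩ − d(ct·y)/(ct)²`,
with `𝒟(p)` the inverse of the matrix `(d_{abc}p^c)`, then `x = (1/6)𝒟(p)q` and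
`(ct)² = 12 d(p)/ (⟨q, 𝒟(p)q⟩ + 12 q₀)`. -/
theorem stmt11 {n : ℕ} (D : Fin n → Fin n → Fin n → ℝ)
    (hsymm₁ : ∀ a b c, D a b c = D a c b) (hsymm₂ : ∀ a b c, D a b c = D b a c)
    (p q : Fin n → ℝ) (q0 : ℝ) (x y : Fin n → ℝ) (c t : ℝ)
    (hc : 0 < c) (ht : 0 < t) (hy : 0 < dCub D y)
    (M Minv : Matrix (Fin n) (Fin n) ℝ)
    (hM : M = Matrix.of fun a b => ∑ e, D a b e * p e)
    (hMinv₁ : M * Minv = 1) (hMinv₂ : Minv * M = 1)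
    (hp : p = fun a => -(c * t) * y a)
    (hq : q = fun a => -6 * c * t * ∑ b, ∑ e, D a b e * x b * y e)
    (hq0 : q0 = 3 * (∑ a, hQuad D x a * (c * t * y a))
        - dCub D (fun a => c * t * y a) / (c * t) ^ 2) :
    (∀ a, x a = (1 / 6 : ℝ) * Minv.mulVec q a) ∧
    (c * t) ^ 2 = 12 * dCub D p / ((∑ a, q a * Minv.mulVec q a) + 12 * q0) := by
  have hct : c * t ≠ 0 := by positivity
  have hdy : dCub D y ≠ 0 := ne_of_gt hy
  -- q = 6 • M.mulVec x
  have hqM : q = (6 : ℝ) • M.mulVec x := by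
    funext a
    simp only [hq, hM, hp, Pi.smul_apply, smul_eq_mul, Matrix.mulVec, dotProduct,
      Matrix.of_apply, Finset.mul_sum, Finset.sum_mul]
    exact Finset.sum_congr rfl fun b _ => Finset.sum_congr rfl fun e _ => by ring
  have hMinvq : Minv.mulVec q = (6 : ℝ) • x := by
    rw [hqM, Matrix.mulVec_smul, Matrix.mulVec_mulVec, hMinv₂, Matrix.one_mulVec]
  have hx : ∀ a, x a = (1 / 6 : ℝ) * Minv.mulVec q a := by
    intro a; rw [hMinvq]; simp
  refine ⟨hx, ?_⟩
  set T : ℝ := ∑ a, ∑ b, ∑ e, D a b e * x a * x b * y e with hT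
  have hU : (∑ a, hQuad D x a * (c * t * y a)) = c * t * T := by
    have h1 : c * t * T = ∑ a, ∑ b, ∑ e, c * t * (D e b a * x e * x b * y a) := by
      rw [hT]
      simp only [Finset.mul_sum]
      exact relabel3 _
    rw [h1]
    simp only [hQuad, Finset.sum_mul]
    refine Finset.sum_congr rfl fun a _ => Finset.sum_congr rfl fun b _ =>
      Finset.sum_congr rfl fun e _ => ?_
    rw [show D e b a = D a b e from by rw [hsymm₂, hsymm₁, hsymm₂]]
    ring
  have hqx : (∑ a, q a * Minv.mulVec q a) = -36 * (c * t) * T := by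
    rw [hMinvq, hT]
    simp only [Pi.smul_apply, smul_eq_mul, hq, Finset.mul_sum, Finset.sum_mul]
    refine Finset.sum_congr rfl fun a _ => Finset.sum_congr rfl fun b _ =>
      Finset.sum_congr rfl fun e _ => by ring
  have hdscale : ∀ (s : ℝ), dCub D (fun a => s * y a) = s ^ 3 * dCub D y := by
    intro s
    simp only [dCub, Finset.mul_sum]
    exact Finset.sum_congr rfl fun a _ => Finset.sum_congr rfl fun b _ =>
      Finset.sum_congr rfl fun e _ => by ring
  have hdp : dCub D p = (-(c * t)) ^ 3 * dCub D y := by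
    rw [hp]; exact hdscale _
  rw [hqx, hq0, hU, hdp, hdscale (c * t)]
  have hden : -36 * (c * t) * T + 12 * (3 * (c * t * T) - (c * t) ^ 3 * dCub D y / (c * t) ^ 2)
      = -12 * (c * t) * dCub D y := by
    field_simp
    ring
  rw [hden, eq_div_iff (mul_ne_zero (mul_ne_zero (by norm_num) hct) hdy)]
  ring
end

section
/- Let d and d' be homogeneous cubics on ℝⁿ and (ℝⁿ)* with quadratic maps h, h' satisfying (h'∘h)(x) = d(x)x and (h∘h')(w) = d'(w)w. Define, for p⁰ ≠ 0, p ∈ ℝⁿ, q₀ ∈ ℝ, q ∈ (ℝⁿ)*: I₄ = (4/(p⁰)²)·d'(h(p) − (1/3)p⁰q) − (1/(p⁰)²)·((q₀p⁰ + ⟨q,p⟩)p⁰ − 2d(p))². Then I₄ = −(q₀p⁰ + ⟨q,p⟩)² + 4q₀d(p) − (4/27)p⁰d'(q) + (4/3)⟨h(p), h'(q)⟩. In particular I₄ is a polynomial in (p⁰, p, q₀, q), homogeneous of degree 4. -/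
/-- Auxiliary trilinear form. -/
def T3 {n : ℕ} (D : Fin n → Fin n → Fin n → ℝ) (u v w : Fin n → ℝ) : ℝ :=
  ∑ a, ∑ b, ∑ c, D a b c * u a * v b * w c

lemma T3_diag {n : ℕ} (D : Fin n → Fin n → Fin n → ℝ) (y : Fin n → ℝ) :
    T3 D y y y = dCub D y := rfl

lemma T3_swap23 {n : ℕ} {D : Fin n → Fin n → Fin n → ℝ}
    (h₁ : ∀ a b c, D a b c = D a c b) (u v w : Fin n → ℝ) :
    T3 D u v w = T3 D u w v := by
  unfold T3
  refine Finset.sum_congr rfl fun a _ => ?_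
  rw [Finset.sum_comm]
  refine Finset.sum_congr rfl fun b _ => Finset.sum_congr rfl fun c _ => ?_
  rw [h₁ a c b]; ring

lemma T3_swap12 {n : ℕ} {D : Fin n → Fin n → Fin n → ℝ}
    (h₂ : ∀ a b c, D a b c = D b a c) (u v w : Fin n → ℝ) :
    T3 D u v w = T3 D v u w := by
  unfold T3
  rw [Finset.sum_comm]
  refine Finset.sum_congr rfl fun a _ => Finset.sum_congr rfl fun b _ =>
    Finset.sum_congr rfl fun c _ => ?_
  rw [h₂ b a c]; ring

lemma T3_first {n : ℕ} (D : Fin n → Fin n → Fin n → ℝ) (w u : Fin n → ℝ) :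
    T3 D w u u = ∑ a, w a * hQuad D u a := by
  unfold T3 hQuad
  refine Finset.sum_congr rfl fun a _ => ?_
  rw [Finset.mul_sum]
  refine Finset.sum_congr rfl fun b _ => ?_
  rw [Finset.mul_sum]
  refine Finset.sum_congr rfl fun c _ => ?_
  ring

lemma T3_add1 {n : ℕ} (D : Fin n → Fin n → Fin n → ℝ) (u u' v w : Fin n → ℝ) :
    T3 D (u + u') v w = T3 D u v w + T3 D u' v w := by
  unfold T3
  rw [← Finset.sum_add_distrib]
  refine Finset.sum_congr rfl fun a _ => ?_
  rw [← Finset.sum_add_distrib]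
  refine Finset.sum_congr rfl fun b _ => ?_
  rw [← Finset.sum_add_distrib]
  refine Finset.sum_congr rfl fun c _ => ?_
  simp [Pi.add_apply]; ring

lemma T3_smul1 {n : ℕ} (D : Fin n → Fin n → Fin n → ℝ) (t : ℝ) (u v w : Fin n → ℝ) :
    T3 D (t • u) v w = t * T3 D u v w := by
  unfold T3
  rw [Finset.mul_sum]
  refine Finset.sum_congr rfl fun a _ => ?_
  rw [Finset.mul_sum]
  refine Finset.sum_congr rfl fun b _ => ?_
  rw [Finset.mul_sum]
  refine Finset.sum_congr rfl fun c _ => ?_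
  simp [Pi.smul_apply, smul_eq_mul]; ring

/-- The quartic invariant of the BPS black hole entropy in the symmetric case:
with the adjoint identities `h'(h(x)) = d(x)x` and `h(h'(w)) = d'(w)w`,
`I₄ = (4/(p⁰)²)d'(h(p) − (1/3)p⁰q) − (1/(p⁰)²)((q₀p⁰ + ⟨q,p⟩)p⁰ − 2d(p))²`
equals the quartic polynomial
`−(q₀p⁰ + ⟨q,p⟩)² + 4q₀d(p) − (4/27)p⁰d'(q) + (4/3)⟨h(p),h'(q)⟩`. -/
theorem stmt13 {n : ℕ} (D D' : Fin n → Fin n → Fin n → ℝ)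
    (hDs₁ : ∀ a b c, D a b c = D a c b) (hDs₂ : ∀ a b c, D a b c = D b a c)
    (hD's₁ : ∀ a b c, D' a b c = D' a c b) (hD's₂ : ∀ a b c, D' a b c = D' b a c)
    (hadj : ∀ x : Fin n → ℝ, hQuad D' (hQuad D x) = dCub D x • x)
    (hadj' : ∀ w : Fin n → ℝ, hQuad D (hQuad D' w) = dCub D' w • w)
    (p0 : ℝ) (hp0 : p0 ≠ 0) (q0 : ℝ) (p q : Fin n → ℝ) :
    (4 / p0 ^ 2) * dCub D' (fun a => hQuad D p a - (1 / 3) * p0 * q a)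
        - (1 / p0 ^ 2) * ((q0 * p0 + ∑ a, q a * p a) * p0 - 2 * dCub D p) ^ 2 =
      -(q0 * p0 + ∑ a, q a * p a) ^ 2 + 4 * q0 * dCub D p
        - (4 / 27) * p0 * dCub D' q
        + (4 / 3) * (∑ a, hQuad D p a * hQuad D' q a) := by
  set u : Fin n → ℝ := hQuad D p with hu
  set t : ℝ := -((1 / 3) * p0) with ht
  -- rewrite the argument as u + t • q
  have harg : (fun a => hQuad D p a - (1 / 3) * p0 * q a) = u + t • q := by
    funext a
    simp [hu, ht, Pi.add_apply, Pi.smul_apply, smul_eq_mul, sub_eq_add_neg, neg_mul]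
  -- symmetry helpers for D'
  have s23 := T3_swap23 hD's₁
  have s12 := T3_swap12 hD's₂
  -- value lemmas
  have hup : ∑ a, u a * p a = dCub D p := by
    rw [← T3_diag D p, T3_first D p p, hu]
    exact Finset.sum_congr rfl fun a _ => mul_comm _ _
  have huu_w : ∀ w : Fin n → ℝ, T3 D' w u u = ∑ a, w a * (dCub D p • p) a := by
    intro w
    rw [T3_first D' w u, hu]
    refine Finset.sum_congr rfl fun a _ => ?_
    rw [hadj p]
  have h1 : T3 D' u u u = (dCub D p) ^ 2 := by
    rw [huu_w u]
    have : ∑ a, u a * (dCub D p • p) a = dCub D p * ∑ a, u a * p a := by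
      rw [Finset.mul_sum]
      refine Finset.sum_congr rfl fun a _ => ?_
      simp [smul_eq_mul]; ring
    rw [this, hup]; ring
  have h2 : T3 D' q u u = dCub D p * ∑ a, q a * p a := by
    rw [huu_w q, Finset.mul_sum]
    refine Finset.sum_congr rfl fun a _ => ?_
    simp [smul_eq_mul]; ring
  have h3 : T3 D' u q q = ∑ a, hQuad D p a * hQuad D' q a := by
    rw [T3_first D' u q, hu]
  have h4 : T3 D' q q q = dCub D' q := T3_diag D' q
  -- expansion
  have hexp : dCub D' (u + t • q) =
      T3 D' u u u + 3 * t * T3 D' q u u + 3 * t ^ 2 * T3 D' u q q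
        + t ^ 3 * T3 D' q q q := by
    rw [← T3_diag]
    have e1 : T3 D' (u + t • q) (u + t • q) (u + t • q)
        = T3 D' u (u + t • q) (u + t • q) + t * T3 D' q (u + t • q) (u + t • q) := by
      rw [T3_add1, T3_smul1]
    have e2 : ∀ v : Fin n → ℝ, T3 D' v (u + t • q) (u + t • q)
        = T3 D' v u u + 2 * t * T3 D' v u q + t ^ 2 * T3 D' v q q := by
      intro v
      rw [s12 v (u + t • q) (u + t • q), T3_add1, T3_smul1]
      rw [s12 u v (u + t • q), s12 q v (u + t • q)]
      rw [s23 v u (u + t • q), s23 v q (u + t • q)]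
      rw [s12 v (u + t • q) u, s12 v (u + t • q) q]
      rw [T3_add1, T3_smul1, T3_add1, T3_smul1]
      rw [s12 u v u, s12 q v u, s12 u v q, s12 q v q]
      have : T3 D' v q u = T3 D' v u q := by rw [s23 v q u]
      rw [this]; ring
    rw [e1, e2 u, e2 q]
    have c1 : T3 D' u u q = T3 D' q u u := by
      rw [s12 u u q, s23 u u q, s12 u q u]
    have c2 : T3 D' q u q = T3 D' u q q := by
      rw [s12 q u q]
    rw [c1, c2]; ring
  rw [harg, hexp, h1, h2, h3, h4, ht]
  field_simp
  ring
end
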